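/- Let G be a simple connected graph on vertex set {1,…,n} such that P_G is reflexive, and let W(G) be its whiskered graph. Then for each 0 ≤ i ≤ n−1, the number of μ ∈ Λ(P_{W(G)}) with ht(μ) = 2i equals the number of μ ∈ Λ(P_{W(G)}) with ht(μ) = 2i+1, and both equal the number of λ ∈ Λ(P_G) with ht(λ) = i. (Equivalently, the h*-polynomial of P_{W(G)} is (1+z)·h*_{P_G}(z²).) -/

import Mathlib

open Matrix Finset

/-- The number of spanning trees of `G`: spanning subgraphs of `G` which are trees. -/
noncomputable def spanningTreeCount {V : Type*} (G : SimpleGraph V) : ℕ :=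
  Nat.card {H : SimpleGraph V // H ≤ G ∧ H.IsTree}

/-- The integer Laplacian matrix of a graph on `Fin m`. -/
noncomputable def lap {m : ℕ} (G : SimpleGraph (Fin m)) : Matrix (Fin m) (Fin m) ℤ :=
  letI : DecidableRel G.Adj := fun _ _ => Classical.dec _
  SimpleGraph.lapMatrix ℤ G

/-- The matrix `[L_G(m) | 𝟙]` : the Laplacian with its last column deleted and a column
of all ones appended. -/
noncomputable def lapAug {m : ℕ} (G : SimpleGraph (Fin m)) : Matrix (Fin m) (Fin m) ℤ :=
  Matrix.of fun r j => if (j : ℕ) + 1 = m then 1 else lap G r j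

/-- The Laplacian matrix with its `i`-th column deleted. -/
noncomputable def lapDel {k : ℕ} (G : SimpleGraph (Fin (k+1))) (i : Fin (k+1)) :
    Matrix (Fin (k+1)) (Fin k) ℤ :=
  (lap G).submatrix id i.succAbove

/-- `Λ(P)` for a simplex whose augmented vertex matrix is `M`: the fractional vectors
`λ` with `0 ≤ λᵢ < 1` such that `λ·M` has integer entries. -/
def Lambda {m : ℕ} (M : Matrix (Fin m) (Fin m) ℤ) : Set (Fin m → ℚ) :=
  {lam | (∀ i, 0 ≤ lam i ∧ lam i < 1) ∧
    ∀ j, ∃ z : ℤ, (Matrix.vecMul lam (M.map (fun a : ℤ => (a : ℚ)))) j = (z : ℚ)}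

/-- The Laplacian simplex `P_G ⊆ ℝ^{m-1}` : the convex hull of the rows of the Laplacian
matrix with its last column deleted. -/
noncomputable def PG {m : ℕ} (G : SimpleGraph (Fin m)) : Set (Fin (m-1) → ℝ) :=
  convexHull ℝ (Set.range fun r : Fin m => fun j : Fin (m-1) =>
    (lap G r ⟨(j : ℕ), by have := j.isLt; omega⟩ : ℝ))

/-- A polytope `P` (with `0` in its interior) is reflexive if its dual
`{x | x·y ≤ 1 ∀ y ∈ P}` is a lattice polytope, i.e. the convex hull of finitely many
integer points. -/
def IsReflexive {d : ℕ} (P : Set (Fin d → ℝ)) : Prop :=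
  (0 : Fin d → ℝ) ∈ interior P ∧
  ∃ S : Finset (Fin d → ℝ), (∀ v ∈ S, ∀ i, ∃ z : ℤ, v i = (z : ℝ)) ∧
    {x : Fin d → ℝ | ∀ y ∈ P, ∑ i, x i * y i ≤ 1} = convexHull ℝ (S : Set (Fin d → ℝ))

/-- The linear code over `ℤ/m` associated to a (reflexive) Laplacian simplex:
`C(P_G) = { x mod m : x/m ∈ Λ(P_G) }`. -/
def code {m : ℕ} (G : SimpleGraph (Fin m)) : Set (Fin m → ZMod m) :=
  {c | ∃ x : Fin m → ℤ, (∀ i, (x i : ZMod m) = c i) ∧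
    (fun i => (x i : ℚ) / (m : ℚ)) ∈ Lambda (lapAug G)}

/-- `[L_G(i) | 𝟙]` : the Laplacian with its `i`-th column deleted (remaining columns in
order) and a column of all ones appended. -/
noncomputable def lapAugAt {m : ℕ} (G : SimpleGraph (Fin m)) (i : Fin m) :
    Matrix (Fin m) (Fin m) ℤ :=
  Matrix.of fun r j =>
    if h : (j : ℕ) + 1 = m then 1
    else lap G r (if (j : ℕ) < (i : ℕ) then j
      else ⟨(j : ℕ) + 1, by have := j.isLt; omega⟩)

/-- The whiskered graph `W(G)` on `{1,…,2m}`: `G` on the first `m` vertices together with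
the whisker edges `{i, i+m}`. -/
def whisker {m : ℕ} (G : SimpleGraph (Fin m)) : SimpleGraph (Fin (m + m)) :=
  SimpleGraph.fromRel fun u v =>
    (∃ (hu : (u : ℕ) < m) (hv : (v : ℕ) < m), G.Adj ⟨(u : ℕ), hu⟩ ⟨(v : ℕ), hv⟩) ∨
    ((u : ℕ) < m ∧ (v : ℕ) = (u : ℕ) + m)


attribute [local instance] Classical.propDecidable

section basics
variable {m : ℕ} (G : SimpleGraph (Fin m))

lemma lap_apply (r v : Fin m) :
    lap G r v = (if r = v then (G.degree r : ℤ) else 0) - (if G.Adj r v then 1 else 0) := by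
  simp [lap, SimpleGraph.lapMatrix, SimpleGraph.degMatrix, SimpleGraph.adjMatrix,
    Matrix.diagonal, Matrix.sub_apply]


lemma lap_rowsum (r : Fin m) : ∑ v, lap G r v = 0 := by
  simp only [lap_apply]
  rw [Finset.sum_sub_distrib, Finset.sum_ite_eq Finset.univ r (fun _ => (G.degree r : ℤ))]
  simp [SimpleGraph.degree_eq_sum_if_adj (R := ℤ) G r]

lemma lap_symm (r v : Fin m) : lap G r v = lap G v r := by
  simp [lap_apply, eq_comm (a := r) (b := v), SimpleGraph.adj_comm G r v]
  split_ifs with h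
  · subst h; ring
  · ring

lemma lap_colsum (v : Fin m) : ∑ r, lap G r v = 0 := by
  calc ∑ r, lap G r v = ∑ r, lap G v r := Finset.sum_congr rfl fun r _ => lap_symm G r v
    _ = 0 := lap_rowsum G v

end basics

section whisk
variable {m : ℕ} (G : SimpleGraph (Fin m))

lemma cast_val (u : Fin m) : ((Fin.castAdd m u : Fin (m+m)) : ℕ) = (u : ℕ) := rfl
lemma nat_val (u : Fin m) : ((Fin.natAdd m u : Fin (m+m)) : ℕ) = m + (u : ℕ) := rfl

lemma adj_cc (u w : Fin m) :
    (whisker G).Adj (Fin.castAdd m u) (Fin.castAdd m w) ↔ G.Adj u w := by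
  simp only [whisker, SimpleGraph.fromRel_adj, cast_val]
  constructor
  · rintro ⟨hne, h | h⟩
    · rcases h with ⟨hu, hv, h⟩ | ⟨h1, h2⟩
      · convert h <;> exact (Fin.ext rfl)
      · exact absurd h2 (by omega)
    · rcases h with ⟨hu, hv, h⟩ | ⟨h1, h2⟩
      · exact ((by convert h <;> exact (Fin.ext rfl)) : G.Adj w u).symm
      · exact absurd h2 (by omega)
  · intro h
    refine ⟨?_, Or.inl (Or.inl ⟨u.isLt, w.isLt, by convert h <;> exact (Fin.ext rfl)⟩)⟩
    simp only [ne_eq, Fin.ext_iff, cast_val]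
    exact fun hh => G.ne_of_adj h (Fin.ext hh)

lemma adj_cn (u w : Fin m) :
    (whisker G).Adj (Fin.castAdd m u) (Fin.natAdd m w) ↔ u = w := by
  simp only [whisker, SimpleGraph.fromRel_adj, cast_val, nat_val]
  constructor
  · rintro ⟨hne, h | h⟩
    · rcases h with ⟨hu, hv, h⟩ | ⟨h1, h2⟩
      · omega
      · exact Fin.ext (by omega)
    · rcases h with ⟨hu, hv, h⟩ | ⟨h1, h2⟩
      · omega
      · omega
  · rintro rfl
    exact ⟨by simp only [ne_eq, Fin.ext_iff, cast_val, nat_val]; omega, Or.inl (Or.inr ⟨u.isLt, by omega⟩)⟩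

lemma adj_nc (u w : Fin m) :
    (whisker G).Adj (Fin.natAdd m u) (Fin.castAdd m w) ↔ u = w := by
  rw [SimpleGraph.adj_comm, adj_cn]
  exact eq_comm

lemma adj_nn (u w : Fin m) :
    ¬ (whisker G).Adj (Fin.natAdd m u) (Fin.natAdd m w) := by
  simp only [whisker, SimpleGraph.fromRel_adj, nat_val]
  rintro ⟨hne, h | h⟩ <;> rcases h with ⟨hu, hv, h⟩ | ⟨h1, h2⟩ <;> omega

lemma deg_nat (u : Fin m) : (whisker G).degree (Fin.natAdd m u) = 1 := by
  rw [← SimpleGraph.card_neighborFinset_eq_degree]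
  have h1 : (whisker G).neighborFinset (Fin.natAdd m u) = {Fin.castAdd m u} := by
    ext v
    simp only [SimpleGraph.mem_neighborFinset, Finset.mem_singleton]
    constructor
    · intro h
      rcases (Nat.lt_or_ge (v : ℕ) m) with hv | hv
      · have hv' : v = Fin.castAdd m ⟨v, hv⟩ := Fin.ext rfl
        rw [hv'] at h ⊢
        rw [adj_nc] at h
        rw [h]
      · have hv' : v = Fin.natAdd m ⟨(v : ℕ) - m, by omega⟩ := Fin.ext (by simp [nat_val]; omega)
        rw [hv'] at h
        exact absurd h (adj_nn G _ _)
    · rintro rfl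
      exact (adj_nc G u u).2 rfl
  rw [h1, Finset.card_singleton]

lemma deg_cast (u : Fin m) : (whisker G).degree (Fin.castAdd m u) = G.degree u + 1 := by
  rw [← SimpleGraph.card_neighborFinset_eq_degree, ← SimpleGraph.card_neighborFinset_eq_degree]
  have : (whisker G).neighborFinset (Fin.castAdd m u)
      = insert (Fin.natAdd m u) ((G.neighborFinset u).map ⟨Fin.castAdd m, Fin.castAdd_injective m m⟩) := by
    ext v
    simp only [SimpleGraph.mem_neighborFinset, Finset.mem_insert, Finset.mem_map,
      Function.Embedding.coeFn_mk]
    constructor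
    · intro h
      rcases (Nat.lt_or_ge (v : ℕ) m) with hv | hv
      · have hv' : v = Fin.castAdd m ⟨v, hv⟩ := Fin.ext rfl
        rw [hv'] at h
        rw [adj_cc] at h
        exact Or.inr ⟨⟨v, hv⟩, by simpa using h, hv'.symm⟩
      · have hv' : v = Fin.natAdd m ⟨(v : ℕ) - m, by omega⟩ := Fin.ext (by simp [nat_val]; omega)
        rw [hv'] at h
        rw [adj_cn] at h
        exact Or.inl (by rw [hv', ← h])
    · rintro (rfl | ⟨x, hx, rfl⟩)
      · exact (adj_cn G u u).2 rfl
      · exact (adj_cc G u x).2 (by simpa using hx)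
  rw [this, Finset.card_insert_of_notMem, Finset.card_map]
  simp only [Finset.mem_map, not_exists, Function.Embedding.coeFn_mk]
  rintro x ⟨hx, hc⟩
  have := congrArg Fin.val hc
  simp only [cast_val, nat_val] at this
  omega

end whisk

section entries
variable {m : ℕ} (G : SimpleGraph (Fin m))

lemma lapW_cc (u w : Fin m) :
    lap (whisker G) (Fin.castAdd m u) (Fin.castAdd m w)
      = lap G u w + (if u = w then 1 else 0) := by
  rw [lap_apply, lap_apply, deg_cast]
  have h1 : (Fin.castAdd m u = Fin.castAdd m w) ↔ u = w := (Fin.castAdd_injective m m).eq_iff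
  rw [if_congr h1 rfl rfl, if_congr (adj_cc G u w) rfl rfl]
  split_ifs
  all_goals (push_cast; try ring)

lemma lapW_cn (u w : Fin m) :
    lap (whisker G) (Fin.castAdd m u) (Fin.natAdd m w) = -(if u = w then 1 else 0) := by
  have hne : ¬ (Fin.castAdd m u = Fin.natAdd m w) := by
    simp only [Fin.ext_iff, cast_val, nat_val]; omega
  rw [lap_apply, if_neg hne, if_congr (adj_cn G u w) rfl rfl]
  split_ifs <;> ring

lemma lapW_nc (u w : Fin m) :
    lap (whisker G) (Fin.natAdd m u) (Fin.castAdd m w) = -(if u = w then 1 else 0) := by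
  rw [lap_symm, lapW_cn]
  exact congrArg Neg.neg (by rw [if_congr (eq_comm) rfl rfl])

lemma lapW_nn (u w : Fin m) :
    lap (whisker G) (Fin.natAdd m u) (Fin.natAdd m w) = (if u = w then 1 else 0) := by
  have h1 : (Fin.natAdd m u = Fin.natAdd m w) ↔ u = w := by
    simp only [Fin.ext_iff, nat_val]; omega
  rw [lap_apply, deg_nat, if_congr h1 rfl rfl, if_neg (adj_nn G u w)]
  split_ifs <;> ring

end entries

section vecmul
variable {m : ℕ}

/-- Rational Laplacian. -/
noncomputable def LQ (G : SimpleGraph (Fin m)) : Matrix (Fin m) (Fin m) ℚ :=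
  (lap G).map (fun a : ℤ => (a : ℚ))

variable (G : SimpleGraph (Fin m))

lemma vecMul_LQ (a : Fin m → ℚ) (v : Fin m) :
    Matrix.vecMul a (LQ G) v = ∑ r, a r * (lap G r v : ℚ) := by
  simp [LQ, Matrix.vecMul, dotProduct]

lemma sum_vecMul_LQ (a : Fin m → ℚ) : ∑ v, Matrix.vecMul a (LQ G) v = 0 := by
  simp only [vecMul_LQ]
  rw [Finset.sum_comm]
  refine Finset.sum_eq_zero fun r _ => ?_
  rw [← Finset.mul_sum]
  have : ∑ v, (lap G r v : ℚ) = ((∑ v, lap G r v : ℤ) : ℚ) := by push_cast; rfl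
  rw [this, lap_rowsum]
  simp

lemma vecMul_LQ_add_const (a : Fin m → ℚ) (c : ℚ) (v : Fin m) :
    Matrix.vecMul (fun r => a r + c) (LQ G) v = Matrix.vecMul a (LQ G) v := by
  simp only [vecMul_LQ, add_mul, Finset.sum_add_distrib]
  have : ∑ r, c * (lap G r v : ℚ) = c * ((∑ r, lap G r v : ℤ) : ℚ) := by
    rw [← Finset.mul_sum]; push_cast; rfl
  rw [this, lap_colsum]
  simp

lemma exists_int_sum {α : Type*} (s : Finset α) (f : α → ℚ)
    (h : ∀ x ∈ s, ∃ z : ℤ, f x = (z : ℚ)) : ∃ z : ℤ, ∑ x ∈ s, f x = (z : ℚ) := by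
  classical
  induction s using Finset.induction_on with
  | empty => exact ⟨0, by simp⟩
  | insert a t hx ih =>
    obtain ⟨z1, hz1⟩ := h a (Finset.mem_insert_self a t)
    obtain ⟨z2, hz2⟩ := ih (fun x hx' => h x (Finset.mem_insert_of_mem hx'))
    exact ⟨z1 + z2, by rw [Finset.sum_insert hx, hz1, hz2]; push_cast; ring⟩

lemma vecMul_W_left (mu : Fin (m+m) → ℚ) (w : Fin m) :
    Matrix.vecMul mu (LQ (whisker G)) (Fin.castAdd m w)
      = Matrix.vecMul (fun u => mu (Fin.castAdd m u)) (LQ G) w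
        + mu (Fin.castAdd m w) - mu (Fin.natAdd m w) := by
  rw [vecMul_LQ, vecMul_LQ, Fin.sum_univ_add]
  have h1 : ∀ u : Fin m, mu (Fin.castAdd m u) * (lap (whisker G) (Fin.castAdd m u) (Fin.castAdd m w) : ℚ)
      = mu (Fin.castAdd m u) * (lap G u w : ℚ) + (if u = w then mu (Fin.castAdd m u) else 0) := by
    intro u
    rw [lapW_cc]
    push_cast
    rw [mul_add]
    congr 1
    split_ifs <;> simp
  have h2 : ∀ u : Fin m, mu (Fin.natAdd m u) * (lap (whisker G) (Fin.natAdd m u) (Fin.castAdd m w) : ℚ)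
      = -(if u = w then mu (Fin.natAdd m u) else 0) := by
    intro u
    rw [lapW_nc]
    split_ifs <;> push_cast <;> ring
  simp only [h1, h2, Finset.sum_add_distrib, Finset.sum_neg_distrib, Finset.sum_ite_eq' Finset.univ w,
    Finset.mem_univ, if_true]
  ring

lemma vecMul_W_right (mu : Fin (m+m) → ℚ) (w : Fin m) :
    Matrix.vecMul mu (LQ (whisker G)) (Fin.natAdd m w)
      = mu (Fin.natAdd m w) - mu (Fin.castAdd m w) := by
  rw [vecMul_LQ, Fin.sum_univ_add]
  have h1 : ∀ u : Fin m, mu (Fin.castAdd m u) * (lap (whisker G) (Fin.castAdd m u) (Fin.natAdd m w) : ℚ)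
      = -(if u = w then mu (Fin.castAdd m u) else 0) := by
    intro u
    rw [lapW_cn]
    split_ifs <;> push_cast <;> ring
  have h2 : ∀ u : Fin m, mu (Fin.natAdd m u) * (lap (whisker G) (Fin.natAdd m u) (Fin.natAdd m w) : ℚ)
      = (if u = w then mu (Fin.natAdd m u) else 0) := by
    intro u
    rw [lapW_nn]
    split_ifs <;> push_cast <;> ring
  simp only [h1, h2, Finset.sum_neg_distrib, Finset.sum_ite_eq' Finset.univ w,
    Finset.mem_univ, if_true]
  ring

end vecmul
section memb
variable {n : ℕ} (G : SimpleGraph (Fin (n+1)))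

lemma vecMul_aug (lam : Fin (n+1) → ℚ) (j : Fin (n+1)) :
    Matrix.vecMul lam ((lapAug G).map (fun a : ℤ => (a : ℚ))) j
      = if (j : ℕ) = n then ∑ r, lam r else Matrix.vecMul lam (LQ G) j := by
  by_cases h : (j : ℕ) = n
  · rw [if_pos h]
    simp only [Matrix.vecMul, dotProduct, lapAug, Matrix.map_apply, Matrix.of_apply]
    refine Finset.sum_congr rfl fun r _ => ?_
    rw [if_pos (by omega)]
    simp
  · rw [if_neg h, vecMul_LQ]
    simp only [Matrix.vecMul, dotProduct, lapAug, Matrix.map_apply, Matrix.of_apply]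
    refine Finset.sum_congr rfl fun r _ => ?_
    rw [if_neg (by omega)]

lemma mem_lambdaG_iff (lam : Fin (n+1) → ℚ) :
    lam ∈ Lambda (lapAug G) ↔
      (∀ i, 0 ≤ lam i ∧ lam i < 1) ∧
      (∀ v : Fin (n+1), (v : ℕ) < n → ∃ z : ℤ, Matrix.vecMul lam (LQ G) v = (z : ℚ)) ∧
      (∃ z : ℤ, ∑ r, lam r = (z : ℚ)) := by
  constructor
  · rintro ⟨hb, hj⟩
    refine ⟨hb, fun v hv => ?_, ?_⟩
    · obtain ⟨z, hz⟩ := hj v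
      rw [vecMul_aug, if_neg (by omega)] at hz
      exact ⟨z, hz⟩
    · obtain ⟨z, hz⟩ := hj ⟨n, by omega⟩
      rw [vecMul_aug, if_pos rfl] at hz
      exact ⟨z, hz⟩
  · rintro ⟨hb, hcol, hsum⟩
    refine ⟨hb, fun j => ?_⟩
    rw [vecMul_aug]
    by_cases h : (j : ℕ) = n
    · rw [if_pos h]; exact hsum
    · rw [if_neg h]; exact hcol j (by omega)

lemma vecMul_augAt_last (mu : Fin ((n+1)+(n+1)) → ℚ) (j : Fin ((n+1)+(n+1)))
    (h : (j : ℕ) + 1 = (n+1)+(n+1)) :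
    Matrix.vecMul mu ((lapAugAt (whisker G) ⟨n, Nat.lt_of_lt_of_le (Nat.lt_succ_self n) (Nat.le_add_right _ _)⟩).map (fun a : ℤ => (a : ℚ))) j
      = ∑ r, mu r := by
  simp only [Matrix.vecMul, dotProduct, lapAugAt, Matrix.map_apply, Matrix.of_apply]
  refine Finset.sum_congr rfl fun r _ => ?_
  rw [dif_pos h]
  simp

lemma vecMul_augAt_col (mu : Fin ((n+1)+(n+1)) → ℚ) (j : Fin ((n+1)+(n+1)))
    (h : ¬ ((j : ℕ) + 1 = (n+1)+(n+1))) :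
    Matrix.vecMul mu ((lapAugAt (whisker G) ⟨n, Nat.lt_of_lt_of_le (Nat.lt_succ_self n) (Nat.le_add_right _ _)⟩).map (fun a : ℤ => (a : ℚ))) j
      = Matrix.vecMul mu (LQ (whisker G))
          (if (j : ℕ) < n then j else ⟨(j : ℕ) + 1, by have := j.isLt; omega⟩) := by
  rw [vecMul_LQ]
  simp only [Matrix.vecMul, dotProduct, lapAugAt, Matrix.map_apply, Matrix.of_apply]
  refine Finset.sum_congr rfl fun r _ => ?_
  rw [dif_neg h]

lemma mem_lambdaW_iff (mu : Fin ((n+1)+(n+1)) → ℚ) :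
    mu ∈ Lambda (lapAugAt (whisker G) ⟨n, Nat.lt_of_lt_of_le (Nat.lt_succ_self n) (Nat.le_add_right _ _)⟩) ↔
      (∀ i, 0 ≤ mu i ∧ mu i < 1) ∧
      (∀ v : Fin ((n+1)+(n+1)), (v : ℕ) ≠ n →
        ∃ z : ℤ, Matrix.vecMul mu (LQ (whisker G)) v = (z : ℚ)) ∧
      (∃ z : ℤ, ∑ r, mu r = (z : ℚ)) := by
  constructor
  · rintro ⟨hb, hj⟩
    refine ⟨hb, fun v hv => ?_, ?_⟩
    · by_cases hlt : (v : ℕ) < n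
      · obtain ⟨z, hz⟩ := hj v
        rw [vecMul_augAt_col G mu v (by omega)] at hz
        rw [if_pos hlt] at hz
        exact ⟨z, hz⟩
      · have hgt : n < (v : ℕ) := by omega
        obtain ⟨z, hz⟩ := hj ⟨(v : ℕ) - 1, by omega⟩
        have hvlt := v.isLt
        rw [vecMul_augAt_col G mu _ (show ¬((v:ℕ) - 1 + 1 = (n+1)+(n+1)) by omega)] at hz
        rw [if_neg (show ¬((v:ℕ) - 1 < n) by omega)] at hz
        have hv' : (⟨((⟨(v : ℕ) - 1, by omega⟩ : Fin ((n+1)+(n+1))) : ℕ) + 1,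
            show (v : ℕ) - 1 + 1 < (n+1)+(n+1) by omega⟩ : Fin ((n+1)+(n+1))) = v := by
          apply Fin.ext
          show (v : ℕ) - 1 + 1 = (v : ℕ)
          omega
        rw [hv'] at hz
        exact ⟨z, hz⟩
    · obtain ⟨z, hz⟩ := hj ⟨2*n+1, by omega⟩
      rw [vecMul_augAt_last G mu _ (show 2*n+1+1 = (n+1)+(n+1) by omega)] at hz
      exact ⟨z, hz⟩
  · rintro ⟨hb, hcol, hsum⟩
    refine ⟨hb, fun j => ?_⟩
    by_cases h : (j : ℕ) + 1 = (n+1)+(n+1)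
    · rw [vecMul_augAt_last G mu j h]; exact hsum
    · rw [vecMul_augAt_col G mu j h]
      apply hcol
      split_ifs with hlt
      · omega
      · show ¬((j:ℕ) + 1 = n)
        omega

end memb

section tset
variable {n : ℕ} (G : SimpleGraph (Fin (n+1)))

def Tset (s : ℚ) : Set (Fin (n+1) → ℚ) :=
  {a | (∀ r, 0 ≤ a r ∧ a r < 1) ∧
    (∀ v : Fin (n+1), (v : ℕ) < n → ∃ z : ℤ, Matrix.vecMul a (LQ G) v = (z : ℚ)) ∧
    ∑ r, a r = s}

lemma L1 (s : ℚ) (hs : ∃ z : ℤ, s = (z : ℚ)) :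
    {lam | lam ∈ Lambda (lapAug G) ∧ ∑ j, lam j = s} = Tset G s := by
  ext lam
  simp only [Set.mem_setOf_eq, Tset, mem_lambdaG_iff]
  constructor
  · rintro ⟨⟨hb, hcol, -⟩, hsum⟩
    exact ⟨hb, hcol, hsum⟩
  · rintro ⟨hb, hcol, hsum⟩
    obtain ⟨z, hz⟩ := hs
    exact ⟨⟨hb, hcol, ⟨z, by rw [hsum, hz]⟩⟩, hsum⟩

lemma sum_append (a : Fin (n+1) → ℚ) :
    ∑ j, Fin.append a a j = 2 * ∑ r, a r := by
  rw [Fin.sum_univ_add]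
  simp only [Fin.append_left, Fin.append_right]
  ring

lemma L23 (s : ℚ) (h2s : ∃ z : ℤ, 2 * s = (z : ℚ)) :
    {mu | mu ∈ Lambda (lapAugAt (whisker G) ⟨n, Nat.lt_of_lt_of_le (Nat.lt_succ_self n) (Nat.le_add_right _ _)⟩) ∧ ∑ j, mu j = 2 * s}
      = (fun a => Fin.append a a) '' Tset G s := by
  ext mu
  simp only [Set.mem_setOf_eq, Set.mem_image, mem_lambdaW_iff]
  constructor
  · rintro ⟨⟨hb, hcol, -⟩, hsum⟩
    set a : Fin (n+1) → ℚ := fun u => mu (Fin.castAdd (n+1) u) with ha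
    have hba : ∀ w, mu (Fin.natAdd (n+1) w) = a w := by
      intro w
      obtain ⟨z, hz⟩ := hcol (Fin.natAdd (n+1) w) (by
        show ¬((n+1) + (w : ℕ) = n); omega)
      rw [vecMul_W_right] at hz
      have h1 := hb (Fin.natAdd (n+1) w)
      have h2 := hb (Fin.castAdd (n+1) w)
      have hz0 : (z : ℚ) < 1 := by rw [← hz]; linarith [h1.2, h2.1]
      have hz1 : (-1 : ℚ) < (z : ℚ) := by rw [← hz]; linarith [h1.1, h2.2]
      have hz2 : z = 0 := by
        have c1 : z < 1 := by exact_mod_cast hz0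
        have c2 : -1 < z := by exact_mod_cast hz1
        omega
      rw [hz2] at hz
      push_cast at hz
      have : mu (Fin.natAdd (n+1) w) = mu (Fin.castAdd (n+1) w) := by linarith
      exact this
    have hmu : mu = Fin.append a a := by
      funext j
      refine Fin.addCases (fun w => ?_) (fun w => ?_) j
      · rw [Fin.append_left]
      · rw [Fin.append_right, hba]
    have hsa : ∑ r, a r = s := by
      rw [hmu, sum_append] at hsum
      linarith
    refine ⟨a, ⟨fun r => hb _, fun v hv => ?_, hsa⟩, hmu.symm⟩
    · obtain ⟨z, hz⟩ := hcol (Fin.castAdd (n+1) v) (by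
        show ¬((v : ℕ) = n); omega)
      rw [vecMul_W_left, hba] at hz
      refine ⟨z, ?_⟩
      have harw : (fun u => mu (Fin.castAdd (n+1) u)) = a := rfl
      rw [harw] at hz
      linarith [hz]
  · rintro ⟨a, ⟨hb, hcol, hsa⟩, hmu⟩
    subst hmu
    refine ⟨⟨?_, ?_, ?_⟩, ?_⟩
    · intro i
      refine Fin.addCases (fun w => ?_) (fun w => ?_) i
      · rw [Fin.append_left]; exact hb w
      · rw [Fin.append_right]; exact hb w
    · intro v hv
      refine Fin.addCases (fun w hw => ?_) (fun w hw => ?_) v hv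
      · rw [vecMul_W_left]
        have harw : (fun u => Fin.append a a (Fin.castAdd (n+1) u)) = a := by
          funext u; rw [Fin.append_left]
        rw [harw, Fin.append_left, Fin.append_right]
        have hwn : (w : ℕ) < n := by
          have := w.isLt
          have : (w : ℕ) ≠ n := hw
          omega
        obtain ⟨z, hz⟩ := hcol w hwn
        exact ⟨z, by rw [← hz]; ring⟩
      · rw [vecMul_W_right, Fin.append_left, Fin.append_right]
        exact ⟨0, by push_cast; ring⟩
    · obtain ⟨z, hz⟩ := h2s
      exact ⟨z, by rw [sum_append, hsa, hz]⟩
    · rw [sum_append, hsa]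

end tset
section dualv
variable {n : ℕ} (G : SimpleGraph (Fin (n+1)))

lemma lapR_apply (r v : Fin (n+1)) :
    ((lap G r v : ℤ) : ℝ)
      = (if r = v then (G.degree r : ℝ) else 0) - (if G.Adj r v then 1 else 0) := by
  rw [lap_apply]
  split_ifs <;> push_cast <;> ring

/-- deleted-row/column matrix over ℝ -/
noncomputable def Ar (j : Fin (n+1)) : Matrix (Fin n) (Fin n) ℝ :=
  Matrix.of fun r c => ((lap G (j.succAbove r) (Fin.castSucc c) : ℤ) : ℝ)

lemma Ar_mulVec (j : Fin (n+1)) (x : Fin n → ℝ) (r : Fin n) :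
    (Ar G j).mulVec x r = ∑ c, ((lap G (j.succAbove r) (Fin.castSucc c) : ℤ) : ℝ) * x c := by
  simp [Ar, Matrix.mulVec, dotProduct]

lemma lapMatrixR_mulVec (y : Fin (n+1) → ℝ) (v : Fin (n+1)) :
    letI : DecidableRel G.Adj := fun _ _ => Classical.dec _
    (SimpleGraph.lapMatrix ℝ G).mulVec y v = ∑ w, ((lap G v w : ℤ) : ℝ) * y w := by
  letI : DecidableRel G.Adj := fun _ _ => Classical.dec _
  simp only [Matrix.mulVec, dotProduct]
  refine Finset.sum_congr rfl fun w _ => ?_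
  congr 1
  rw [lapR_apply]
  simp [SimpleGraph.lapMatrix, SimpleGraph.degMatrix, SimpleGraph.adjMatrix, Matrix.diagonal]

lemma lap_colsum_R (c : Fin (n+1)) : ∑ v, ((lap G v c : ℤ) : ℝ) = 0 := by
  have : ∑ v, ((lap G v c : ℤ) : ℝ) = ((∑ v, lap G v c : ℤ) : ℝ) := by push_cast; rfl
  rw [this, lap_colsum]; simp

lemma del_inj (hG : G.Connected) (j : Fin (n+1)) (x : Fin n → ℝ)
    (hx : (Ar G j).mulVec x = 0) : x = 0 := by
  set y : Fin (n+1) → ℝ := fun v => if h : (v : ℕ) < n then x ⟨(v : ℕ), h⟩ else 0 with hy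
  have hrow : ∀ v : Fin (n+1), ∑ w, ((lap G v w : ℤ) : ℝ) * y w
      = ∑ c : Fin n, ((lap G v (Fin.castSucc c) : ℤ) : ℝ) * x c := by
    intro v
    rw [Fin.sum_univ_castSucc]
    have h1 : y (Fin.last n) = 0 := by
      rw [hy]; simp only []
      exact dif_neg (lt_irrefl n)
    have h2 : ∀ c : Fin n, y (Fin.castSucc c) = x c := by
      intro c
      rw [hy]; simp only []
      have hc : (c.castSucc : ℕ) < n := c.isLt
      rw [dif_pos hc]
      exact congrArg x (Fin.ext rfl)
    rw [h1]
    simp only [h2, mul_zero, add_zero]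
  have hzero : ∀ v : Fin (n+1), v ≠ j → ∑ w, ((lap G v w : ℤ) : ℝ) * y w = 0 := by
    intro v hv
    obtain ⟨r, hr⟩ := Fin.exists_succAbove_eq hv
    rw [hrow, ← hr]
    have := congrFun hx r
    rw [Ar_mulVec] at this
    exact this
  have hsumall : ∑ v, (∑ w, ((lap G v w : ℤ) : ℝ) * y w) = 0 := by
    rw [Finset.sum_comm]
    refine Finset.sum_eq_zero fun w _ => ?_
    rw [← Finset.sum_mul, lap_colsum_R, zero_mul]
  have hj : ∑ w, ((lap G j w : ℤ) : ℝ) * y w = 0 := by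
    have hsplit : ∑ v, (∑ w, ((lap G v w : ℤ) : ℝ) * y w)
        = (∑ w, ((lap G j w : ℤ) : ℝ) * y w)
          + ∑ v ∈ Finset.univ.erase j, (∑ w, ((lap G v w : ℤ) : ℝ) * y w) := by
      rw [← Finset.sum_erase_add _ _ (Finset.mem_univ j)]
      ring
    rw [hsplit, Finset.sum_eq_zero (fun v hv => hzero v (Finset.ne_of_mem_erase hv))] at hsumall
    simpa using hsumall
  have hall : ∀ v, ∑ w, ((lap G v w : ℤ) : ℝ) * y w = 0 := by
    intro v
    by_cases hv : v = j
    · rw [hv]; exact hj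
    · exact hzero v hv
  letI : DecidableRel G.Adj := fun _ _ => Classical.dec _
  have hker : Matrix.toLin' (SimpleGraph.lapMatrix ℝ G) y = 0 := by
    rw [Matrix.toLin'_apply]
    funext v
    rw [Pi.zero_apply, lapMatrixR_mulVec]
    exact hall v
  have hreach := (SimpleGraph.lapMatrix_mulVec_eq_zero_iff_forall_reachable (G := G)).mp (by rwa [Matrix.toLin'_apply] at hker)
  have hconst : ∀ v, y v = y (Fin.last n) := fun v =>
    hreach v (Fin.last n) (hG.preconnected v (Fin.last n))
  have hlast : y (Fin.last n) = 0 := by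
    rw [hy]; simp only []
    exact dif_neg (lt_irrefl n)
  funext c
  have := hconst (Fin.castSucc c)
  rw [hlast] at this
  rw [hy] at this; simp only [] at this
  have hc : (c.castSucc : ℕ) < n := c.isLt
  rw [dif_pos hc] at this
  rw [show (⟨((c.castSucc : Fin (n+1)) : ℕ), hc⟩ : Fin n) = c from Fin.ext rfl] at this
  simpa using this

end dualv

section dualv2
variable {n : ℕ} (G : SimpleGraph (Fin (n+1)))

lemma dual_vertex_int (hG : G.Connected) (href : IsReflexive (PG G)) (j : Fin (n+1)) :
    ∃ x : Fin n → ℤ, ∀ v : Fin (n+1),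
      (∑ c, lap G v (Fin.castSucc c) * x c) = if v = j then -(n : ℤ) else 1 := by
  classical
  -- the vertex-row points of the simplex
  set p : Fin (n+1) → (Fin n → ℝ) :=
    fun r => fun c => ((lap G r (Fin.castSucc c) : ℤ) : ℝ) with hp
  have hPG : PG G = convexHull ℝ (Set.range p) := rfl
  -- injectivity of the deleted system, hence surjectivity
  have hinj : Function.Injective ((Ar G j).mulVecLin) := by
    rw [injective_iff_map_eq_zero]
    intro x hx0
    exact del_inj G hG j x (by rw [← Matrix.mulVecLin_apply]; exact hx0)
  have hsurj : Function.Surjective ((Ar G j).mulVecLin) :=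
    (LinearMap.injective_iff_surjective).mp hinj
  obtain ⟨xR, hxR⟩ := hsurj (fun _ => (1 : ℝ))
  rw [Matrix.mulVecLin_apply] at hxR
  -- values of the full rows on xR
  set g : Fin (n+1) → ℝ := fun v => ∑ c, ((lap G v (Fin.castSucc c) : ℤ) : ℝ) * xR c with hg
  have hg_ne : ∀ v : Fin (n+1), v ≠ j → g v = 1 := by
    intro v hv
    obtain ⟨r, hr⟩ := Fin.exists_succAbove_eq hv
    have := congrFun hxR r
    rw [Ar_mulVec] at this
    rw [hg, ← hr]
    exact this
  have hg_sum : ∑ v, g v = 0 := by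
    rw [hg]
    rw [Finset.sum_comm]
    refine Finset.sum_eq_zero fun c _ => ?_
    rw [← Finset.sum_mul, lap_colsum_R, zero_mul]
  have hcard : (Finset.univ.erase j).card = n := by
    rw [Finset.card_erase_of_mem (Finset.mem_univ j), Finset.card_univ, Fintype.card_fin]
    omega
  have hg_j : g j = -(n : ℝ) := by
    have hsplit : ∑ v, g v = g j + ∑ v ∈ Finset.univ.erase j, g v := by
      rw [← Finset.sum_erase_add _ _ (Finset.mem_univ j)]; ring
    rw [hsplit, Finset.sum_congr rfl (fun v hv => hg_ne v (Finset.ne_of_mem_erase hv)),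
      Finset.sum_const, hcard] at hg_sum
    simp only [nsmul_eq_mul, mul_one] at hg_sum
    linarith
  -- xR is in the dual polytope
  obtain ⟨-, hre⟩ := href
  have hre' : ∃ S : Finset (Fin n → ℝ), (∀ v ∈ S, ∀ i, ∃ z : ℤ, v i = (z : ℝ)) ∧
      {x : Fin n → ℝ | ∀ y ∈ PG G, ∑ i, x i * y i ≤ 1}
        = convexHull ℝ (S : Set (Fin n → ℝ)) := hre
  obtain ⟨S, hSint, hS⟩ := hre'
  have hxRdual : ∀ y ∈ PG G, ∑ i, xR i * y i ≤ 1 := by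
    intro y hy
    rw [hPG] at hy
    have hconv : Convex ℝ {y : Fin n → ℝ | ∑ i, xR i * y i ≤ 1} := by
      refine convex_halfSpace_le ?_ 1
      constructor
      · intro y1 y2
        simp only [Pi.add_apply, mul_add]
        rw [Finset.sum_add_distrib]
      · intro c y1
        simp only [Pi.smul_apply, smul_eq_mul, Finset.mul_sum]
        exact Finset.sum_congr rfl fun i _ => by ring
    have hsub : Set.range p ⊆ {y : Fin n → ℝ | ∑ i, xR i * y i ≤ 1} := by
      rintro - ⟨v, rfl⟩
      simp only [Set.mem_setOf_eq]
      have : ∑ i, xR i * p v i = g v := by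
        rw [hg]
        exact Finset.sum_congr rfl fun c _ => by rw [hp]; ring
      rw [this]
      by_cases hv : v = j
      · rw [hv, hg_j]
        have : (0:ℝ) ≤ n := by positivity
        linarith
      · rw [hg_ne v hv]
    exact convexHull_min hsub hconv hy
  have hxRS : xR ∈ convexHull ℝ (S : Set (Fin n → ℝ)) := by
    rw [← hS]
    exact hxRdual
  rw [Finset.convexHull_eq] at hxRS
  obtain ⟨w, hw0, hw1, hwc⟩ := hxRS
  rw [Finset.centerMass_eq_of_sum_1 _ _ hw1] at hwc
  -- every element of S lies in the dual polytope
  have hSdual : ∀ s ∈ S, ∀ v : Fin (n+1), ∑ c, ((lap G v (Fin.castSucc c) : ℤ) : ℝ) * s c ≤ 1 := by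
    intro s hs v
    have hs' : s ∈ {x : Fin n → ℝ | ∀ y ∈ PG G, ∑ i, x i * y i ≤ 1} := by
      rw [hS]
      exact subset_convexHull ℝ _ hs
    have hpv : p v ∈ PG G := by
      rw [hPG]
      exact subset_convexHull ℝ _ ⟨v, rfl⟩
    have := hs' (p v) hpv
    calc ∑ c, ((lap G v (Fin.castSucc c) : ℤ) : ℝ) * s c
        = ∑ i, s i * p v i := Finset.sum_congr rfl fun c _ => by rw [hp]; ring
      _ ≤ 1 := this
  -- the linear functional Φ
  set Φ : (Fin n → ℝ) → ℝ :=
    fun y => ∑ v ∈ Finset.univ.erase j, ∑ c, ((lap G v (Fin.castSucc c) : ℤ) : ℝ) * y c with hΦ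
  have hΦxR : Φ xR = n := by
    have h0 : Φ xR = ∑ v ∈ Finset.univ.erase j, g v := rfl
    rw [h0, Finset.sum_congr rfl (fun v hv => hg_ne v (Finset.ne_of_mem_erase hv)),
      Finset.sum_const, hcard]
    simp
  have hΦS : ∀ s ∈ S, Φ s ≤ n := by
    intro s hs
    calc Φ s = ∑ v ∈ Finset.univ.erase j, ∑ c, ((lap G v (Fin.castSucc c) : ℤ) : ℝ) * s c := rfl
      _ ≤ ∑ v ∈ Finset.univ.erase j, (1:ℝ) :=
          Finset.sum_le_sum fun v _ => hSdual s hs v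
      _ = n := by rw [Finset.sum_const, hcard]; simp
  have hxRc : ∀ c, xR c = ∑ s ∈ S, w s * s c := by
    intro c
    rw [← hwc]
    simp [Finset.sum_apply]
  have hΦlin : Φ xR = ∑ s ∈ S, w s * Φ s := by
    calc Φ xR = ∑ v ∈ Finset.univ.erase j, ∑ c, ((lap G v (Fin.castSucc c) : ℤ) : ℝ) * xR c := rfl
      _ = ∑ v ∈ Finset.univ.erase j, ∑ c, ∑ s ∈ S,
            w s * (((lap G v (Fin.castSucc c) : ℤ) : ℝ) * s c) := by
          refine Finset.sum_congr rfl fun v _ => Finset.sum_congr rfl fun c _ => ?_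
          rw [hxRc c, Finset.mul_sum]
          exact Finset.sum_congr rfl fun s _ => by ring
      _ = ∑ v ∈ Finset.univ.erase j, ∑ s ∈ S, ∑ c,
            w s * (((lap G v (Fin.castSucc c) : ℤ) : ℝ) * s c) := by
          refine Finset.sum_congr rfl fun v _ => ?_
          rw [Finset.sum_comm]
      _ = ∑ s ∈ S, ∑ v ∈ Finset.univ.erase j, ∑ c,
            w s * (((lap G v (Fin.castSucc c) : ℤ) : ℝ) * s c) := by
          rw [Finset.sum_comm]
      _ = ∑ s ∈ S, w s * Φ s := by
          refine Finset.sum_congr rfl fun s _ => ?_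
          rw [hΦ]
          simp only []
          rw [Finset.mul_sum]
          exact Finset.sum_congr rfl fun v _ => by rw [Finset.mul_sum]
  have hle : ∀ s ∈ S, w s * Φ s ≤ w s * n := fun s hs =>
    mul_le_mul_of_nonneg_left (hΦS s hs) (hw0 s hs)
  have hsum_eq : ∑ s ∈ S, w s * Φ s = ∑ s ∈ S, w s * n := by
    rw [← hΦlin, hΦxR, ← Finset.sum_mul, hw1, one_mul]
  have hall := (Finset.sum_eq_sum_iff_of_le hle).mp hsum_eq
  obtain ⟨s₀, hs₀S, hws₀⟩ := Finset.exists_ne_zero_of_sum_ne_zero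
    (show ∑ y ∈ S, w y ≠ (0:ℝ) by rw [hw1]; norm_num)
  have hw₀pos : 0 < w s₀ := lt_of_le_of_ne (hw0 s₀ hs₀S) (Ne.symm hws₀)
  have hΦs₀ : Φ s₀ = n := mul_left_cancel₀ (ne_of_gt hw₀pos) (hall s₀ hs₀S)
  have hrows : ∀ v ∈ Finset.univ.erase j,
      ∑ c, ((lap G v (Fin.castSucc c) : ℤ) : ℝ) * s₀ c = 1 := by
    have hle2 : ∀ v ∈ Finset.univ.erase j,
        ∑ c, ((lap G v (Fin.castSucc c) : ℤ) : ℝ) * s₀ c ≤ 1 :=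
      fun v _ => hSdual s₀ hs₀S v
    refine (Finset.sum_eq_sum_iff_of_le hle2).mp ?_
    calc ∑ v ∈ Finset.univ.erase j, ∑ c, ((lap G v (Fin.castSucc c) : ℤ) : ℝ) * s₀ c
        = Φ s₀ := rfl
      _ = n := hΦs₀
      _ = ∑ v ∈ Finset.univ.erase j, (1:ℝ) := by rw [Finset.sum_const, hcard]; simp
  have hs₀xR : s₀ = xR := by
    apply hinj
    rw [Matrix.mulVecLin_apply, Matrix.mulVecLin_apply, hxR]
    funext r
    rw [Ar_mulVec]
    exact hrows (j.succAbove r)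
      (Finset.mem_erase.mpr ⟨Fin.succAbove_ne j r, Finset.mem_univ _⟩)
  have hint := hSint s₀ hs₀S
  choose zc hzc using hint
  refine ⟨zc, fun v => ?_⟩
  have key : ∑ c, ((lap G v (Fin.castSucc c) : ℤ) : ℝ) * ((zc c : ℤ) : ℝ) = g v := by
    rw [hg]
    refine Finset.sum_congr rfl fun c _ => ?_
    rw [← hzc c, hs₀xR]
  apply @Int.cast_injective ℝ _ _
  by_cases hv : v = j
  · rw [if_pos hv]
    push_cast
    rw [key, hv, hg_j]
  · rw [if_neg hv]
    push_cast
    rw [key, hg_ne v hv]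

end dualv2

section keyk
variable {n : ℕ} (G : SimpleGraph (Fin (n+1)))

lemma keyK (hG : G.Connected) (href : IsReflexive (PG G)) (a : Fin (n+1) → ℚ)
    (hcol : ∀ v : Fin (n+1), (v : ℕ) < n → ∃ z : ℤ, Matrix.vecMul a (LQ G) v = (z : ℚ))
    (j : Fin (n+1)) :
    ∃ z : ℤ, ((n : ℚ) + 1) * a j - ∑ r, a r = (z : ℚ) := by
  obtain ⟨x, hx⟩ := dual_vertex_int G hG href j
  have hxQ : ∀ v, ∑ c, ((lap G v (Fin.castSucc c) : ℤ) : ℚ) * ((x c : ℤ) : ℚ)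
      = if v = j then -(n : ℚ) else 1 := by
    intro v
    have h := hx v
    by_cases hv : v = j
    · rw [if_pos hv]; rw [if_pos hv] at h; exact_mod_cast h
    · rw [if_neg hv]; rw [if_neg hv] at h; exact_mod_cast h
  have hswap : ∑ v, a v * (if v = j then -(n : ℚ) else 1)
      = ∑ c : Fin n, Matrix.vecMul a (LQ G) (Fin.castSucc c) * ((x c : ℤ) : ℚ) := by
    calc ∑ v, a v * (if v = j then -(n : ℚ) else 1)
        = ∑ v, a v * ∑ c, ((lap G v (Fin.castSucc c) : ℤ) : ℚ) * ((x c : ℤ) : ℚ) :=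
          Finset.sum_congr rfl fun v _ => by rw [hxQ v]
      _ = ∑ v, ∑ c, a v * (((lap G v (Fin.castSucc c) : ℤ) : ℚ) * ((x c : ℤ) : ℚ)) :=
          Finset.sum_congr rfl fun v _ => Finset.mul_sum _ _ _
      _ = ∑ c : Fin n, ∑ v, a v * (((lap G v (Fin.castSucc c) : ℤ) : ℚ) * ((x c : ℤ) : ℚ)) := by
          rw [Finset.sum_comm]
      _ = ∑ c : Fin n, Matrix.vecMul a (LQ G) (Fin.castSucc c) * ((x c : ℤ) : ℚ) := by
          refine Finset.sum_congr rfl fun c _ => ?_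
          rw [vecMul_LQ, Finset.sum_mul]
          exact Finset.sum_congr rfl fun v _ => by ring
  have hterm : ∀ c ∈ (Finset.univ : Finset (Fin n)),
      ∃ z : ℤ, Matrix.vecMul a (LQ G) (Fin.castSucc c) * ((x c : ℤ) : ℚ) = (z : ℚ) := by
    intro c _
    obtain ⟨z, hz⟩ := hcol (Fin.castSucc c) c.isLt
    exact ⟨z * x c, by rw [hz]; push_cast; ring⟩
  obtain ⟨Z, hZ⟩ := exists_int_sum Finset.univ _ hterm
  have hLHS : ∑ v, a v * (if v = j then -(n : ℚ) else 1)
      = ∑ r, a r - ((n : ℚ) + 1) * a j := by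
    have h1 : ∀ v, a v * (if v = j then -(n : ℚ) else 1)
        = a v + (if v = j then -((n : ℚ) + 1) * a v else 0) := by
      intro v; split_ifs with h <;> ring
    rw [Finset.sum_congr rfl fun v _ => h1 v, Finset.sum_add_distrib,
      Finset.sum_ite_eq' Finset.univ j]
    simp only [Finset.mem_univ, if_true]
    ring
  refine ⟨-Z, ?_⟩
  rw [hLHS] at hswap
  rw [hZ] at hswap
  push_cast
  linarith

end keyk

section lfour
variable {n : ℕ} (G : SimpleGraph (Fin (n+1)))

lemma L4 (hG : G.Connected) (href : IsReflexive (PG G)) (i : ℕ) :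
    Tset G ((i : ℚ) + 1/2)
      = (fun a => fun r => a r + 1/(2*((n : ℚ)+1))) '' Tset G (i : ℚ) := by
  set m : ℚ := (n : ℚ) + 1 with hm
  have hm0 : 0 < m := by rw [hm]; positivity
  have hmc : m * (1/(2*m)) = 1/2 := by field_simp
  have hsumc : ∑ _r : Fin (n+1), 1/(2*m) = 1/2 := by
    rw [Finset.sum_const, Finset.card_univ, Fintype.card_fin, nsmul_eq_mul]
    push_cast
    rw [← hm, hmc]
  ext b
  simp only [Set.mem_image]
  constructor
  · rintro ⟨hb, hcolb, hsb⟩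
    refine ⟨fun r => b r - 1/(2*m), ⟨?_, ?_, ?_⟩, ?_⟩
    · intro r
      obtain ⟨z, hz⟩ := keyK G hG href b hcolb r
      rw [hsb] at hz
      constructor
      · have hge : (0:ℚ) ≤ (z:ℚ) + i := by
          by_contra hcon
          push_neg at hcon
          have hzi : z + (i:ℤ) < 0 := by exact_mod_cast hcon
          have hzi' : (z:ℚ) + i ≤ -1 := by
            have : z + (i:ℤ) ≤ -1 := by omega
            exact_mod_cast this
          have hbr0 : 0 ≤ m * b r := mul_nonneg (le_of_lt hm0) (hb r).1
          rw [hm] at hbr0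
          linarith
        have h12 : 1/2 ≤ m * b r := by rw [hm]; linarith
        have : m * (1/(2*m)) ≤ m * b r := by rw [hmc]; exact h12
        have := (mul_le_mul_iff_right₀ hm0).mp this
        linarith
      · have := (hb r).2
        have hc0 : 0 < 1/(2*m) := by positivity
        linarith
    · intro v hv
      obtain ⟨z, hz⟩ := hcolb v hv
      refine ⟨z, ?_⟩
      have harw : (fun r => b r - 1/(2*m)) = fun r => b r + (-(1/(2*m))) := by
        funext r; ring
      rw [harw, vecMul_LQ_add_const]
      exact hz
    · rw [Finset.sum_sub_distrib, hsb, hsumc]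
      ring
    · funext r; ring
  · rintro ⟨a, ⟨ha, hcola, hsa⟩, rfl⟩
    refine ⟨?_, ?_, ?_⟩
    · intro r
      obtain ⟨z, hz⟩ := keyK G hG href a hcola r
      rw [hsa] at hz
      constructor
      · have hc0 : 0 < 1/(2*m) := by positivity
        have := (ha r).1
        linarith
      · have hlt : (z:ℚ) + i < (n:ℚ) + 1 := by
          have h1 : m * a r < m * 1 := by
            exact (mul_lt_mul_iff_right₀ hm0).mpr (ha r).2
          rw [mul_one, hm] at h1
          linarith
        have hle : (z:ℚ) + i ≤ n := by
          have h1 : z + (i:ℤ) < (n:ℤ) + 1 := by exact_mod_cast hlt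
          have h2 : z + (i:ℤ) ≤ (n:ℤ) := by omega
          exact_mod_cast h2
        have h3 : m * (a r + 1/(2*m)) ≤ (n:ℚ) + 1/2 := by
          rw [mul_add, hmc, hm]
          linarith
        have h4 : m * (a r + 1/(2*m)) < m * 1 := by
          rw [mul_one, hm]
          linarith
        have := (mul_lt_mul_iff_right₀ hm0).mp h4
        linarith
    · intro v hv
      obtain ⟨z, hz⟩ := hcola v hv
      exact ⟨z, by rw [vecMul_LQ_add_const]; exact hz⟩
    · rw [Finset.sum_add_distrib, hsa, hsumc]

end lfour

/-- If `P_G` is reflexive (`G` on `n+1` vertices), then for each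
`0 ≤ i ≤ n` the number of `μ ∈ Λ(P_{W(G)})` of height `2i` equals the number of those of
height `2i+1`, and both equal the number of `λ ∈ Λ(P_G)` of height `i`; equivalently,
`h*_{P_{W(G)}}(z) = (1+z)·h*_{P_G}(z²)`. -/
theorem hStar_whisker {n : ℕ}
    (G : SimpleGraph (Fin (n+1))) (hG : G.Connected)
    (href : IsReflexive (PG G)) :
    ∀ i : ℕ, i ≤ n →
      ({mu ∈ Lambda (lapAugAt (whisker G) ⟨n, by omega⟩) | ∑ j, mu j = (2 * i : ℚ)}.ncard
          = {lam ∈ Lambda (lapAug G) | ∑ j, lam j = (i : ℚ)}.ncard) ∧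
      ({mu ∈ Lambda (lapAugAt (whisker G) ⟨n, by omega⟩) |
            ∑ j, mu j = (2 * i + 1 : ℚ)}.ncard
          = {lam ∈ Lambda (lapAug G) | ∑ j, lam j = (i : ℚ)}.ncard) := by
  intro i _
  have hinjA : ∀ s : Set (Fin (n+1) → ℚ),
      Set.InjOn (fun a : Fin (n+1) → ℚ => Fin.append a a) s := by
    intro s a1 _ a2 _ h
    funext u
    have := congrFun h (Fin.castAdd (n+1) u)
    simpa [Fin.append_left] using this
  have hinjC : ∀ s : Set (Fin (n+1) → ℚ),
      Set.InjOn (fun a : Fin (n+1) → ℚ => fun r => a r + 1/(2*((n : ℚ)+1))) s := by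
    intro s a1 _ a2 _ h
    funext r
    have := congrFun h r
    simp only [] at this
    linarith
  constructor
  · rw [L23 G (i : ℚ) ⟨2*i, by push_cast; ring⟩, L1 G (i : ℚ) ⟨i, rfl⟩]
    exact Set.ncard_image_of_injOn (hinjA _)
  · have hodd : {mu | mu ∈ Lambda (lapAugAt (whisker G) ⟨n, by omega⟩)
        ∧ ∑ j, mu j = (2 * (i:ℚ) + 1)}
        = {mu | mu ∈ Lambda (lapAugAt (whisker G) ⟨n, by omega⟩)
        ∧ ∑ j, mu j = 2 * ((i:ℚ) + 1/2)} := by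
      have h2 : 2 * ((i:ℚ) + 1/2) = 2 * (i:ℚ) + 1 := by ring
      rw [h2]
    rw [hodd, L23 G ((i:ℚ) + 1/2) ⟨2*i+1, by push_cast; ring⟩, L4 G hG href i,
      L1 G (i : ℚ) ⟨i, rfl⟩]
    rw [Set.ncard_image_of_injOn (hinjA _), Set.ncard_image_of_injOn (hinjC _)]
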